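/- For $\nu > 0$ and $0 < x \leq 1$, the Bessel function of the first kind satisfies $1 \leq \frac{J_\nu(\nu x)}{x^\nu J_\nu(\nu)} \leq e^{\nu(1-x)}$; in particular $J_\nu(\nu x) \geq x^\nu J_\nu(\nu) > 0$ and $J_\nu(\nu x) \leq e^{\nu(1-x)} x^\nu J_\nu(\nu)$. -/

import Mathlib

/-!
Write `J_ν(t) = (t/2)^ν j_ν(t²/4)` with the entire function `j_ν = reducedBesselJ ν`, so that
`j_ν' = -j_{ν+1}` and the ratio in question is `F(νx/2) / F(ν/2)` with `F s = j_ν(s²)`.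
A Sturm-type argument on Bessel's equation shows that `J_μ` has no zero in `(0, μ]`, so
`j_{ν+1}(s²) > 0` for `0 ≤ s ≤ ν/2`. Hence `F' = -2s j_{ν+1}(s²) ≤ 0` there: the lower bound.
For the upper bound, `e^{2s} F(s)` is increasing, as its derivative is
`2e^{2s}(F - s j_{ν+1}(s²))`; and by the three-term recurrence `e^{2s}(F - s j_{ν+1}(s²))` has
derivative `e^{2s}(2ν + 1 - 4s) j_{ν+1}(s²) ≥ 0` and is positive at `0`.
-/

/-- The Bessel function of the first kind of order `ν`, for positive real arguments. -/
noncomputable def besselJ (ν x : ℝ) : ℝ :=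
  ∑' m : ℕ, ((-1 : ℝ) ^ m / ((m.factorial : ℝ) * Real.Gamma ((m : ℝ) + ν + 1))) *
    (x / 2) ^ (2 * (m : ℝ) + ν)

open Real Set
open scoped Nat

theorem hasDerivAt_tsum_mul_pow {a : ℕ → ℝ} (ha : ∀ r, Summable fun m => a m * r ^ m) (z : ℝ) :
    HasDerivAt (fun z => ∑' m, a m * z ^ m) (∑' m, (m + 1) * a (m + 1) * z ^ m) z := by
  set R := |z| + 1
  have hR : 1 ≤ R := by simp [R]
  have hz : z ∈ Metric.ball 0 R := by simp [R]
  -- `m R^(m-1) ≤ (2R)^m` turns the derivative series into the series at `2R`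
  have hbound : ∀ m, ∀ y ∈ Metric.ball (0 : ℝ) R,
      ‖a m * (m * y ^ (m - 1))‖ ≤ |a m| * (2 * R) ^ m := by
    intro m y hy
    rw [mem_ball_zero_iff, Real.norm_eq_abs] at hy
    have hm : (m : ℝ) ≤ 2 ^ m := by exact_mod_cast Nat.lt_two_pow_self.le
    have hy' : |y| ^ (m - 1) ≤ R ^ m :=
      (pow_le_pow_left₀ (abs_nonneg y) hy.le _).trans (pow_le_pow_right₀ hR (Nat.sub_le m 1))
    rw [Real.norm_eq_abs, abs_mul, abs_mul, abs_pow, Nat.abs_cast, mul_pow]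
    gcongr
  have hu : Summable fun m => |a m| * (2 * R) ^ m := by
    refine (summable_abs_iff.mpr (ha (2 * R))).congr fun m => ?_
    rw [abs_mul, abs_pow, abs_of_pos (by positivity : (0:ℝ) < 2 * R)]
  have hderiv := hasDerivAt_tsum_of_isPreconnected hu Metric.isOpen_ball
    (convex_ball 0 R).isPreconnected (fun m y _ => (hasDerivAt_pow m y).const_mul (a m)) hbound
    (Metric.mem_ball_self (by positivity : (0:ℝ) < R)) (ha 0) hz
  refine hderiv.congr_deriv ?_
  rw [(hu.of_norm_bounded fun m => hbound m z hz).tsum_eq_zero_add]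
  simp only [CharP.cast_eq_zero, zero_mul, mul_zero, zero_add, Nat.cast_add, Nat.cast_one,
    add_tsub_cancel_right]
  exact tsum_congr fun m => by ring

theorem monotoneOn_Icc_of_hasDerivAt_nonneg {f f' : ℝ → ℝ} {a b : ℝ}
    (hf : ContinuousOn f (Icc a b)) (hf' : ∀ x ∈ Ioo a b, HasDerivAt f (f' x) x)
    (hf'₀ : ∀ x ∈ Ioo a b, 0 ≤ f' x) : MonotoneOn f (Icc a b) :=
  monotoneOn_of_hasDerivWithinAt_nonneg (convex_Icc a b) hf
    (by simpa using fun x hx => (hf' x hx).hasDerivWithinAt) (by simpa using hf'₀)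

theorem antitoneOn_Icc_of_hasDerivAt_nonpos {f f' : ℝ → ℝ} {a b : ℝ}
    (hf : ContinuousOn f (Icc a b)) (hf' : ∀ x ∈ Ioo a b, HasDerivAt f (f' x) x)
    (hf'₀ : ∀ x ∈ Ioo a b, f' x ≤ 0) : AntitoneOn f (Icc a b) :=
  antitoneOn_of_hasDerivWithinAt_nonpos (convex_Icc a b) hf
    (by simpa using fun x hx => (hf' x hx).hasDerivWithinAt) (by simpa using hf'₀)

theorem HasDerivAt.rpow_const_mul {f : ℝ → ℝ} {f' μ s : ℝ} (hs : 0 < s) (hf : HasDerivAt f f' s) :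
    HasDerivAt (fun x => x ^ μ * f x) (s ^ (μ - 1) * (μ * f s + s * f')) s := by
  refine ((Real.hasDerivAt_rpow_const (Or.inl hs.ne')).mul hf).congr_deriv ?_
  rw [Real.rpow_sub_one hs.ne']
  field_simp

theorem forall_Icc_pos_of_forall_Ico_pos {α : Type*} [ConditionallyCompleteLinearOrder α]
    [TopologicalSpace α] [OrderTopology α] {f : α → ℝ} {a b : α}
    (hf : ContinuousOn f (Icc a b)) (h : ∀ c ∈ Icc a b, (∀ x ∈ Ico a c, 0 < f x) → 0 < f c) :
    ∀ x ∈ Icc a b, 0 < f x := by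
  by_contra! hneg
  set S := Icc a b ∩ f ⁻¹' Iic 0
  have hS : IsClosed S := hf.preimage_isClosed_of_isClosed isClosed_Icc isClosed_Iic
  have hbdd : BddBelow S := ⟨a, fun x hx => hx.1.1⟩
  obtain ⟨hc, hfc⟩ := hS.csInf_mem hneg hbdd
  refine (h _ hc fun x hx => ?_).not_ge hfc
  by_contra! hfx
  exact hx.2.not_ge (csInf_le hbdd ⟨⟨hx.1, hx.2.le.trans hc.2⟩, hfx⟩)

noncomputable def besselCoeff (μ : ℝ) (m : ℕ) : ℝ := (-1) ^ m / (m ! * Gamma (m + μ + 1))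

/-- `J_μ(t) = (t / 2) ^ μ * reducedBesselJ μ ((t / 2) ^ 2)`, and `Γ(μ + 1) * reducedBesselJ μ z` is
the hypergeometric function `₀F₁(; μ + 1; -z)`. -/
noncomputable def reducedBesselJ (μ z : ℝ) : ℝ := ∑' m, besselCoeff μ m * z ^ m

theorem besselJ_eq_rpow_mul_reducedBesselJ (ν : ℝ) {t : ℝ} (ht : 0 < t) :
    besselJ ν t = (t / 2) ^ ν * reducedBesselJ ν ((t / 2) ^ 2) := by
  rw [besselJ, reducedBesselJ, ← tsum_mul_left]
  refine tsum_congr fun m => ?_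
  rw [Real.rpow_add (by positivity), Real.rpow_mul (by positivity), Real.rpow_two,
    Real.rpow_natCast, besselCoeff]
  ring

section ReducedBessel

variable {μ : ℝ}

theorem Gamma_add_one_le_Gamma_nat_add (hμ : 0 ≤ μ) (m : ℕ) :
    Gamma (μ + 1) ≤ Gamma (m + μ + 1) := by
  induction m with
  | zero => simp
  | succ n ih =>
    have hpos : 0 < (n : ℝ) + μ + 1 := by positivity
    rw [Nat.cast_succ, add_right_comm (n : ℝ) 1, Real.Gamma_add_one hpos.ne']
    exact ih.trans (le_mul_of_one_le_left (Real.Gamma_pos_of_pos hpos).le (by linarith))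

theorem abs_besselCoeff_le (hμ : 0 ≤ μ) (m : ℕ) :
    |besselCoeff μ m| ≤ 1 / (m ! * Gamma (μ + 1)) := by
  have hΓ : 0 < Gamma (μ + 1) := Real.Gamma_pos_of_pos (by linarith)
  rw [besselCoeff, abs_div, abs_pow, abs_neg, abs_one, one_pow, abs_of_pos (by positivity)]
  exact one_div_le_one_div_of_le (by positivity)
    (by gcongr; exact Gamma_add_one_le_Gamma_nat_add hμ m)

theorem summable_besselCoeff_mul_pow (hμ : 0 ≤ μ) (z : ℝ) :
    Summable fun m => besselCoeff μ m * z ^ m := by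
  refine ((Real.summable_pow_div_factorial |z|).mul_left (Gamma (μ + 1))⁻¹).of_norm_bounded
    fun m => ?_
  rw [Real.norm_eq_abs, abs_mul, abs_pow]
  calc |besselCoeff μ m| * |z| ^ m ≤ 1 / (m ! * Gamma (μ + 1)) * |z| ^ m := by
        gcongr; exact abs_besselCoeff_le hμ m
    _ = (Gamma (μ + 1))⁻¹ * (|z| ^ m / m !) := by ring

theorem succ_mul_besselCoeff_succ (μ : ℝ) (m : ℕ) :
    (m + 1) * besselCoeff μ (m + 1) = -besselCoeff (μ + 1) m := by
  have : ((m + 1 : ℕ) : ℝ) + μ + 1 = m + (μ + 1) + 1 := by push_cast; ring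
  rw [besselCoeff, besselCoeff, this, Nat.factorial_succ, Nat.cast_mul, pow_succ]
  field_simp
  push_cast
  ring

theorem besselCoeff_zero (μ : ℝ) : besselCoeff μ 0 = (Gamma (μ + 1))⁻¹ := by
  simp [besselCoeff]

theorem besselCoeff_succ_add_besselCoeff (hμ : 0 ≤ μ) (m : ℕ) :
    besselCoeff μ (m + 1) + besselCoeff (μ + 2) m = (μ + 1) * besselCoeff (μ + 1) (m + 1) := by
  have h1 : ((m + 1 : ℕ) : ℝ) + μ + 1 = m + μ + 2 := by push_cast; ring
  have h2 : ((m + 1 : ℕ) : ℝ) + (μ + 1) + 1 = m + μ + 2 + 1 := by push_cast; ring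
  have h3 : (m : ℝ) + (μ + 2) + 1 = m + μ + 2 + 1 := by ring
  have hpos : 0 < (m : ℝ) + μ + 2 := by positivity
  have hΓ : 0 < Gamma (m + μ + 2) := Real.Gamma_pos_of_pos hpos
  rw [besselCoeff, besselCoeff, besselCoeff, h1, h2, h3, Real.Gamma_add_one hpos.ne',
    Nat.factorial_succ, Nat.cast_mul, pow_succ]
  field_simp
  push_cast
  ring

theorem besselCoeff_zero_eq_mul (hμ : 0 ≤ μ) : besselCoeff μ 0 = (μ + 1) * besselCoeff (μ + 1) 0 := by
  have hpos : 0 < μ + 1 := by linarith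
  rw [besselCoeff_zero, besselCoeff_zero, Real.Gamma_add_one hpos.ne', mul_inv,
    ← mul_assoc, mul_inv_cancel₀ hpos.ne', one_mul]

theorem hasDerivAt_reducedBesselJ (hμ : 0 ≤ μ) (z : ℝ) :
    HasDerivAt (reducedBesselJ μ) (-reducedBesselJ (μ + 1) z) z := by
  refine (hasDerivAt_tsum_mul_pow (summable_besselCoeff_mul_pow hμ) z).congr_deriv ?_
  simp_rw [succ_mul_besselCoeff_succ, neg_mul, tsum_neg, reducedBesselJ]

theorem continuous_reducedBesselJ (hμ : 0 ≤ μ) : Continuous (reducedBesselJ μ) :=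
  continuous_iff_continuousAt.mpr fun z => (hasDerivAt_reducedBesselJ hμ z).continuousAt

theorem reducedBesselJ_zero (μ : ℝ) : reducedBesselJ μ 0 = (Gamma (μ + 1))⁻¹ := by
  rw [reducedBesselJ, tsum_eq_single 0 fun m hm => by simp [hm], pow_zero, mul_one,
    besselCoeff_zero]

theorem reducedBesselJ_zero_pos (hμ : 0 ≤ μ) : 0 < reducedBesselJ μ 0 := by
  rw [reducedBesselJ_zero]
  exact inv_pos.mpr (Real.Gamma_pos_of_pos (by linarith))

/-- The three-term recurrence `J_μ(t) + J_{μ+2}(t) = 2(μ+1)/t · J_{μ+1}(t)`. -/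
theorem reducedBesselJ_add_mul_reducedBesselJ_add_two (hμ : 0 ≤ μ) (z : ℝ) :
    reducedBesselJ μ z + z * reducedBesselJ (μ + 2) z = (μ + 1) * reducedBesselJ (μ + 1) z := by
  have hs := summable_besselCoeff_mul_pow hμ z
  have hs₂ := (summable_besselCoeff_mul_pow (by linarith : 0 ≤ μ + 2) z).mul_left z
  have hs₁ := (summable_besselCoeff_mul_pow (by linarith : 0 ≤ μ + 1) z).mul_left (μ + 1)
  rw [reducedBesselJ, reducedBesselJ, reducedBesselJ, ← tsum_mul_left, ← tsum_mul_left,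
    hs.tsum_eq_zero_add, hs₁.tsum_eq_zero_add, add_assoc,
    ← ((summable_nat_add_iff 1).mpr hs).tsum_add hs₂]
  simp only [pow_zero, mul_one, besselCoeff_zero_eq_mul hμ, pow_succ]
  congr 1
  refine tsum_congr fun m => ?_
  linear_combination (z ^ m * z) * besselCoeff_succ_add_besselCoeff hμ m

end ReducedBessel

section Positivity

variable {μ : ℝ}

theorem hasDerivAt_reducedBesselJ_sq (hμ : 0 ≤ μ) (s : ℝ) :
    HasDerivAt (fun s => reducedBesselJ μ (s ^ 2))
      (-(2 * s) * reducedBesselJ (μ + 1) (s ^ 2)) s := by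
  refine ((hasDerivAt_reducedBesselJ hμ (s ^ 2)).comp s (hasDerivAt_pow 2 s)).congr_deriv ?_
  push_cast
  ring

theorem continuous_reducedBesselJ_sq (hμ : 0 ≤ μ) : Continuous fun s => reducedBesselJ μ (s ^ 2) :=
  (continuous_reducedBesselJ hμ).comp (continuous_pow 2)

theorem mul_reducedBesselJ_add_one_sq_le_of_forall_lt (hμ : 0 < μ) {b : ℝ} (hbμ : 2 * b ≤ μ)
    (hpos : ∀ s ∈ Ico 0 b, 0 < reducedBesselJ μ (s ^ 2)) {s : ℝ} (hs : s ∈ Ioc 0 b) :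
    2 * s ^ 2 * reducedBesselJ (μ + 1) (s ^ 2) ≤ μ * reducedBesselJ μ (s ^ 2) := by
  set F := fun s : ℝ => reducedBesselJ μ (s ^ 2)
  set G := fun s : ℝ => reducedBesselJ (μ + 1) (s ^ 2)
  -- `s ^ μ * u s` is `s` times the derivative of `s ^ μ * F s = J_μ (2 s)`; it vanishes at `0`
  -- and, by Bessel's equation, has derivative `s ^ (μ - 1) * (μ ^ 2 - 4 s ^ 2) * F s`.
  set u := fun s : ℝ => μ * F s - 2 * s ^ 2 * G s
  have hu : ∀ s, HasDerivAt u (2 * μ * s * G s - 4 * s * F s) s := fun s => by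
    refine ((hasDerivAt_reducedBesselJ_sq hμ.le s).const_mul μ |>.sub
      (((hasDerivAt_pow 2 s).const_mul 2).mul
        (hasDerivAt_reducedBesselJ_sq (by linarith) s))).congr_deriv ?_
    have hrec := reducedBesselJ_add_mul_reducedBesselJ_add_two hμ.le (s ^ 2)
    simp only [G, add_assoc, one_add_one_eq_two] at hrec ⊢
    push_cast
    linear_combination (4 * s) * hrec
  have hW : MonotoneOn (fun s => s ^ μ * u s) (Icc 0 b) := by
    refine monotoneOn_Icc_of_hasDerivAt_nonneg
      ((Real.continuous_rpow_const hμ.le).mul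
        (continuous_iff_continuousAt.2 fun s => (hu s).continuousAt)).continuousOn
      (fun s hs => (hu s).rpow_const_mul hs.1) fun s hs => ?_
    have : μ * u s + s * (2 * μ * s * G s - 4 * s * F s) = (μ ^ 2 - 4 * s ^ 2) * F s := by ring
    rw [this]
    have := hpos s ⟨hs.1.le, hs.2⟩
    have : 0 ≤ μ ^ 2 - 4 * s ^ 2 := by nlinarith [hs.1, hs.2]
    have := Real.rpow_pos_of_pos hs.1 (μ - 1)
    positivity
  have h := hW ⟨le_rfl, hs.1.le.trans hs.2⟩ ⟨hs.1.le, hs.2⟩ hs.1.le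
  simp only [Real.zero_rpow hμ.ne', zero_mul] at h
  linarith [nonneg_of_mul_nonneg_right h (Real.rpow_pos_of_pos hs.1 μ)]

theorem reducedBesselJ_sq_pos_of_forall_lt (hμ : 0 < μ) {b : ℝ} (hb : 0 < b) (hbμ : 2 * b ≤ μ)
    (hpos : ∀ s ∈ Ico 0 b, 0 < reducedBesselJ μ (s ^ 2)) : 0 < reducedBesselJ μ (b ^ 2) := by
  have hw : MonotoneOn (fun s => s ^ μ * reducedBesselJ μ (s ^ 2)) (Icc 0 b) := by
    refine monotoneOn_Icc_of_hasDerivAt_nonneg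
      ((Real.continuous_rpow_const hμ.le).mul (continuous_reducedBesselJ_sq hμ.le)).continuousOn
      (fun s hs => (hasDerivAt_reducedBesselJ_sq hμ.le s).rpow_const_mul hs.1) fun s hs => ?_
    have := mul_reducedBesselJ_add_one_sq_le_of_forall_lt hμ hbμ hpos ⟨hs.1, hs.2.le⟩
    exact mul_nonneg (Real.rpow_pos_of_pos hs.1 _).le (by linarith)
  have hw_half : 0 < (b / 2) ^ μ * reducedBesselJ μ ((b / 2) ^ 2) :=
    mul_pos (Real.rpow_pos_of_pos (by positivity) μ) (hpos _ ⟨by positivity, by linarith⟩)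
  have := hw_half.trans_le (hw ⟨by positivity, by linarith⟩ ⟨hb.le, le_rfl⟩ (by linarith))
  exact (pos_iff_pos_of_mul_pos this).mp (Real.rpow_pos_of_pos hb μ)

theorem reducedBesselJ_sq_pos (hμ : 0 < μ) {s : ℝ} (hs : s ∈ Icc 0 (μ / 2)) :
    0 < reducedBesselJ μ (s ^ 2) := by
  refine forall_Icc_pos_of_forall_Ico_pos (continuous_reducedBesselJ_sq hμ.le).continuousOn
    (fun b hb hlt => ?_) s hs
  rcases hb.1.eq_or_lt with rfl | hb₀
  · simpa using reducedBesselJ_zero_pos hμ.le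
  · exact reducedBesselJ_sq_pos_of_forall_lt hμ hb₀ (by linarith [hb.2]) hlt

end Positivity

section Monotonicity

variable {ν : ℝ}

theorem reducedBesselJ_add_one_sq_pos (hν : 0 ≤ ν) {s : ℝ} (hs : s ∈ Icc 0 (ν / 2)) :
    0 < reducedBesselJ (ν + 1) (s ^ 2) :=
  reducedBesselJ_sq_pos (by linarith) ⟨hs.1, hs.2.trans (by linarith)⟩

theorem antitoneOn_reducedBesselJ_sq (hν : 0 ≤ ν) :
    AntitoneOn (fun s => reducedBesselJ ν (s ^ 2)) (Icc 0 (ν / 2)) :=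
  antitoneOn_Icc_of_hasDerivAt_nonpos (continuous_reducedBesselJ_sq hν).continuousOn
    (fun s _ => hasDerivAt_reducedBesselJ_sq hν s) fun s hs => by
      have := reducedBesselJ_add_one_sq_pos hν (Ioo_subset_Icc_self hs)
      nlinarith [hs.1]

theorem reducedBesselJ_sq_sub_mul_nonneg (hν : 0 ≤ ν) {s : ℝ} (hs : s ∈ Icc 0 (ν / 2)) :
    0 ≤ reducedBesselJ ν (s ^ 2) - s * reducedBesselJ (ν + 1) (s ^ 2) := by
  set F := fun s : ℝ => reducedBesselJ ν (s ^ 2)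
  set G := fun s : ℝ => reducedBesselJ (ν + 1) (s ^ 2)
  have hF := hasDerivAt_reducedBesselJ_sq hν
  have hG := hasDerivAt_reducedBesselJ_sq (by linarith : 0 ≤ ν + 1)
  have hD : ∀ s, HasDerivAt (fun s => exp (2 * s) * (F s - s * G s))
      (exp (2 * s) * ((2 * ν + 1 - 4 * s) * G s)) s := fun s => by
    have hexp : HasDerivAt (fun s => exp (2 * s)) (exp (2 * s) * 2) s := by
      simpa using ((hasDerivAt_id s).const_mul 2).exp
    refine (hexp.mul ((hF s).sub ((hasDerivAt_id s).mul (hG s)))).congr_deriv ?_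
    have hrec := reducedBesselJ_add_mul_reducedBesselJ_add_two hν (s ^ 2)
    simp only [G, add_assoc, one_add_one_eq_two] at hrec ⊢
    simp only [Pi.sub_apply, Pi.mul_apply, id]
    linear_combination (2 * exp (2 * s)) * hrec
  have hmono : MonotoneOn (fun s => exp (2 * s) * (F s - s * G s)) (Icc 0 (ν / 2)) :=
    monotoneOn_Icc_of_hasDerivAt_nonneg
      (continuous_iff_continuousAt.2 fun s => (hD s).continuousAt).continuousOn
      (fun s _ => hD s) fun s hs => by
        have := reducedBesselJ_add_one_sq_pos hν (Ioo_subset_Icc_self hs)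
        have : 0 ≤ 2 * ν + 1 - 4 * s := by linarith [hs.2]
        positivity
  have h0 := hmono ⟨le_rfl, by linarith⟩ hs hs.1
  simp only [mul_zero, Real.exp_zero, one_mul, zero_mul, sub_zero, F, ne_eq,
    OfNat.ofNat_ne_zero, not_false_eq_true, zero_pow] at h0
  have := (reducedBesselJ_zero_pos hν).trans_le h0
  exact (pos_iff_pos_of_mul_pos this).mp (exp_pos _) |>.le

theorem monotoneOn_exp_mul_reducedBesselJ_sq (hν : 0 ≤ ν) :
    MonotoneOn (fun s => exp (2 * s) * reducedBesselJ ν (s ^ 2)) (Icc 0 (ν / 2)) := by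
  have hD : ∀ s, HasDerivAt (fun s => exp (2 * s) * reducedBesselJ ν (s ^ 2))
      (2 * exp (2 * s) * (reducedBesselJ ν (s ^ 2) - s * reducedBesselJ (ν + 1) (s ^ 2))) s :=
    fun s => by
      have hexp : HasDerivAt (fun s => exp (2 * s)) (exp (2 * s) * 2) s := by
        simpa using ((hasDerivAt_id s).const_mul 2).exp
      exact (hexp.mul (hasDerivAt_reducedBesselJ_sq hν s)).congr_deriv (by ring)
  refine monotoneOn_Icc_of_hasDerivAt_nonneg
    (continuous_iff_continuousAt.2 fun s => (hD s).continuousAt).continuousOn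
    (fun s _ => hD s) fun s hs => ?_
  have := reducedBesselJ_sq_sub_mul_nonneg hν (Ioo_subset_Icc_self hs)
  positivity

theorem reducedBesselJ_sq_le_exp_mul (hν : 0 ≤ ν) {s : ℝ} (hs : s ∈ Icc 0 (ν / 2)) :
    reducedBesselJ ν (s ^ 2) ≤ exp (ν - 2 * s) * reducedBesselJ ν ((ν / 2) ^ 2) := by
  have h := monotoneOn_exp_mul_reducedBesselJ_sq hν hs ⟨by linarith [hs.1, hs.2], le_rfl⟩ hs.2
  dsimp only at h
  rwa [mul_div_cancel₀ ν two_ne_zero, ← le_div_iff₀' (exp_pos _), mul_div_right_comm,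
    ← Real.exp_sub] at h

end Monotonicity

theorem stmt14 (ν x : ℝ) (hν : 0 < ν) (hx0 : 0 < x) (hx1 : x ≤ 1) :
    (1 ≤ besselJ ν (ν * x) / (x ^ ν * besselJ ν ν) ∧
      besselJ ν (ν * x) / (x ^ ν * besselJ ν ν) ≤ Real.exp (ν * (1 - x))) ∧
    0 < x ^ ν * besselJ ν ν ∧
    x ^ ν * besselJ ν ν ≤ besselJ ν (ν * x) ∧
    besselJ ν (ν * x) ≤ Real.exp (ν * (1 - x)) * (x ^ ν * besselJ ν ν) := by
  have hs : ν * x / 2 ∈ Icc 0 (ν / 2) := ⟨by positivity, by nlinarith⟩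
  have hJx : besselJ ν (ν * x) = x ^ ν * ((ν / 2) ^ ν * reducedBesselJ ν ((ν * x / 2) ^ 2)) := by
    rw [besselJ_eq_rpow_mul_reducedBesselJ ν (by positivity), mul_div_right_comm,
      Real.mul_rpow (by positivity) hx0.le, mul_comm ((ν / 2) ^ ν), mul_assoc]
  have hJ : besselJ ν ν = (ν / 2) ^ ν * reducedBesselJ ν ((ν / 2) ^ 2) :=
    besselJ_eq_rpow_mul_reducedBesselJ ν hν
  have hpos : 0 < x ^ ν * besselJ ν ν := by
    have := reducedBesselJ_sq_pos hν ⟨by positivity, le_rfl⟩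
    rw [hJ]
    positivity
  have hlow : x ^ ν * besselJ ν ν ≤ besselJ ν (ν * x) := by
    rw [hJx, hJ]
    gcongr
    exact antitoneOn_reducedBesselJ_sq hν.le hs ⟨by positivity, le_rfl⟩ hs.2
  have hup : besselJ ν (ν * x) ≤ exp (ν * (1 - x)) * (x ^ ν * besselJ ν ν) := by
    have := reducedBesselJ_sq_le_exp_mul hν.le hs
    rw [mul_div_cancel₀ _ two_ne_zero, ← mul_one_sub] at this
    rw [hJx, hJ]
    calc _ ≤ x ^ ν * ((ν / 2) ^ ν * (exp (ν * (1 - x)) * reducedBesselJ ν ((ν / 2) ^ 2))) := by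
          gcongr
      _ = _ := by ring
  exact ⟨⟨(one_le_div hpos).2 hlow, (div_le_iff₀ hpos).2 hup⟩, hpos, hlow, hup⟩
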